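/- arXiv:1910.01067 — 3 statements merged into one kernel-verified Lean document; each statement's English description precedes it below -/
import Mathlib

section
/- Let G be a mixed graph and suppose every bidirected edge x ↔ y of G is replaced by a new vertex h_{xy} together with directed edges h_{xy} → x and h_{xy} → y, yielding a graph G'. If G is a chain graph (has no partially directed cycle), then G' is a directed acyclic graph. -/
universe u

structure MixedGraph (V : Type u) where
  directed : V → V → Prop
  bidirected : V → V → Prop
  bidirected_symm : ∀ u v, bidirected u v → bidirected v u

namespace MixedGraph

variable {V : Type u}

/-- A partially directed cycle: `n ≥ 3` distinct vertices arranged cyclically,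
each consecutive pair joined by `vᵢ → vᵢ₊₁` or `vᵢ ↔ vᵢ₊₁`, with at least one
directed edge. -/
def HasPartiallyDirectedCycle (G : MixedGraph V) : Prop :=
  ∃ (n : ℕ) (f : ZMod n → V), 3 ≤ n ∧ Function.Injective f ∧
    (∀ i, G.directed (f i) (f (i + 1)) ∨ G.bidirected (f i) (f (i + 1))) ∧
    ∃ j, G.directed (f j) (f (j + 1))

/-- A directed cycle: as above but with every edge directed. -/
def HasDirectedCycle (G : MixedGraph V) : Prop :=
  ∃ (n : ℕ) (f : ZMod n → V), 3 ≤ n ∧ Function.Injective f ∧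
    ∀ i, G.directed (f i) (f (i + 1))

/-- The edge between `a` and `w` has an arrowhead at `w`. -/
def ArrowAt (G : MixedGraph V) (a w : V) : Prop :=
  G.directed a w ∨ G.bidirected a w

/-- `u` and `v` are adjacent (joined by an edge of any type/orientation). -/
def IsEdge (G : MixedGraph V) (u v : V) : Prop :=
  G.directed u v ∨ G.directed v u ∨ G.bidirected u v

/-- `w` is a collider between its chain-neighbours `a` and `b`. -/
def ColliderTriple (G : MixedGraph V) (a w b : V) : Prop :=
  G.ArrowAt a w ∧ G.ArrowAt b w

/-- `x` and `y` are collider connected: joined by a chain on which every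
non-endpoint vertex is a collider. -/
def ColliderConnected (G : MixedGraph V) (x y : V) : Prop :=
  ∃ p : List V, p.Nodup ∧ p.head? = some x ∧ p.getLast? = some y ∧
    2 ≤ p.length ∧ p.Chain' G.IsEdge ∧
    ∀ k a w b, p[k]? = some a → p[k+1]? = some w → p[k+2]? = some b →
      G.ColliderTriple a w b

/-- `u` is an ancestor of `v` (with the convention that `v ∈ An(v)`):
reachability by a directed path. -/
def Ancestor (G : MixedGraph V) (u v : V) : Prop :=
  Relation.ReflTransGen G.directed u v

/-- `An(Z)`: `Z` together with all ancestors of elements of `Z`. -/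
def An (G : MixedGraph V) (Z : Set V) : Set V :=
  {u | ∃ z ∈ Z, G.Ancestor u z}

/-- The vertex `w` at (interior) position `k` of the chain `p` is a collider. -/
def ColliderAt (G : MixedGraph V) (p : List V) (k : ℕ) (w : V) : Prop :=
  ∃ a b, p[k-1]? = some a ∧ p[k]? = some w ∧ p[k+1]? = some b ∧
    G.ColliderTriple a w b

/-- The chain `p` m-connects `α` and `β` given `Z`: every noncollider on it is
outside `Z` and every collider is in `An(Z)`. -/
def MConnecting (G : MixedGraph V) (Z : Set V) (α β : V) (p : List V) : Prop :=
  p.Nodup ∧ p.head? = some α ∧ p.getLast? = some β ∧ 2 ≤ p.length ∧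
  p.Chain' G.IsEdge ∧
  ∀ k w, 0 < k → k + 1 < p.length → p[k]? = some w →
    (G.ColliderAt p k w → w ∈ G.An Z) ∧ (¬ G.ColliderAt p k w → w ∉ Z)

/-- `X` and `Y` are m-separated given `Z`. -/
def MSep (G : MixedGraph V) (X Y Z : Set V) : Prop :=
  ∀ α ∈ X, ∀ β ∈ Y, ∀ p : List V, ¬ G.MConnecting Z α β p

/-- The induced subgraph of `G` on the vertex set `A`. -/
def induce (G : MixedGraph V) (A : Set V) : MixedGraph V where
  directed u v := G.directed u v ∧ u ∈ A ∧ v ∈ A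
  bidirected u v := G.bidirected u v ∧ u ∈ A ∧ v ∈ A
  bidirected_symm := fun u v h => ⟨G.bidirected_symm u v h.1, h.2.2, h.2.1⟩

/-- The augmented graph `G^a`: `c` and `d` adjacent iff collider connected. -/
def Aug (G : MixedGraph V) (c d : V) : Prop := G.ColliderConnected c d

/-- Separation in an undirected graph (given as a relation `R`): every path
from `X` to `Y` meets `Z`. -/
def UndirSep (R : V → V → Prop) (X Y Z : Set V) : Prop :=
  ∀ x ∈ X, ∀ y ∈ Y, ∀ p : List V, p.Nodup → p.head? = some x →
    p.getLast? = some y → p.Chain' R → ∃ w ∈ Z, w ∈ p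

/-- Connectivity by a path of bidirected edges (chain-component relation). -/
def BidirConn (G : MixedGraph V) : V → V → Prop :=
  Relation.ReflTransGen G.bidirected

end MixedGraph

namespace MixedGraph

/-- Replace every bidirected edge `x ↔ y` by a fresh latent vertex `h_{xy}`
with directed edges `h_{xy} → x` and `h_{xy} → y`. -/
def latentize {V : Type u} (G : MixedGraph V) : MixedGraph (V ⊕ (V × V)) where
  directed a b :=
    match a, b with
    | Sum.inl u, Sum.inl v => G.directed u v
    | Sum.inr (x, y), Sum.inl z => G.bidirected x y ∧ (z = x ∨ z = y)
    | _, _ => False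
  bidirected _ _ := False
  bidirected_symm := fun _ _ h => h.elim

end MixedGraph

/-- if `G` is a chain graph, the graph `G'` obtained by replacing
each bidirected edge with a latent common cause is a DAG: it has only directed
edges and no directed cycle. -/
theorem latentize_of_chain_graph_is_dag {V : Type u} (G : MixedGraph V)
    (h : ¬ G.HasPartiallyDirectedCycle) :
    (∀ a b, ¬ (G.latentize).bidirected a b) ∧ ¬ (G.latentize).HasDirectedCycle := by
  refine ⟨fun a b hb => hb, fun hc => h ?_⟩
  obtain ⟨n, f, hn, hinj, hdir⟩ := hc
  have hinl : ∀ j : ZMod n, ∃ v, f j = Sum.inl v := by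
    intro j
    have hd := hdir (j - 1)
    rw [sub_add_cancel] at hd
    cases hfj : f j with
    | inl v => exact ⟨v, rfl⟩
    | inr p =>
      rw [hfj] at hd
      cases hf1 : f (j - 1) with
      | inl u => rw [hf1] at hd; exact hd.elim
      | inr q => rw [hf1] at hd; exact hd.elim
  choose g hg using hinl
  refine ⟨n, g, hn, ?_, fun i => Or.inl ?_, ⟨0, ?_⟩⟩
  · intro i j hij
    apply hinj
    rw [hg i, hg j, hij]
  · have hd := hdir i
    rw [hg i, hg (i + 1)] at hd
    exact hd
  · have hd := hdir 0
    rw [hg 0, hg (0 + 1)] at hd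
    exact hd
end

section
/- Order-independence of the stable skeleton recovery: fix a finite vertex set V and a conditional-independence oracle I(u, v, S) (a predicate on pairs of distinct vertices and subsets S ⊆ V \ {u,v}). For each level i, define the edge-removal step that, starting from the current undirected graph H with adjacency sets a_H frozen at the start of level i, removes an edge {u, v} iff there exists S with |S| = i, S ⊆ a_H(u) \ {v} or S ⊆ a_H(v) \ {u}, and I(u, v, S) holds. Then the undirected graph obtained after processing all levels i = 0, 1, ..., |V| − 2 does not depend on the order in which pairs (u, v) or subsets S are considered within each level. -/
universe u

namespace StablePC

variable {V : Type u} [DecidableEq V]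

/-- Edge `{u,v}` is removable at level `i` w.r.t. the frozen graph `H`: there
is a set `S` of size `i` inside `a_H(u) \ {v}` or `a_H(v) \ {u}` with
`I(u,v,S)`. -/
def Rem (I : V → V → Finset V → Prop) (i : ℕ) (H : V → V → Prop)
    (u v : V) : Prop :=
  ∃ S : Finset V, S.card = i ∧
    ((∀ w ∈ S, H u w ∧ w ≠ v) ∨ (∀ w ∈ S, H v w ∧ w ≠ u)) ∧ I u v S

/-- Sequentially process the pairs in `L`, deleting an edge exactly when it is
removable w.r.t. the frozen graph `H0` (adjacencies frozen at level start). -/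
def procList (I : V → V → Finset V → Prop) (i : ℕ) (H0 : V → V → Prop)
    (L : List (V × V)) (H : V → V → Prop) : V → V → Prop :=
  L.foldl
    (fun H' p => fun a b =>
      H' a b ∧ ¬ (((a, b) = p ∨ (b, a) = p) ∧ Rem I i H0 p.1 p.2)) H

/-- The stable skeleton procedure: start with the complete graph and process
level `i` using the pair-ordering `Ls i`, with adjacencies frozen per level. -/
def stableLevels (I : V → V → Finset V → Prop) (Ls : ℕ → List (V × V)) :
    ℕ → V → V → Prop
  | 0 => fun u v => u ≠ v
  | n + 1 => procList I n (stableLevels I Ls n) (Ls n) (stableLevels I Ls n)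

end StablePC

namespace StablePC

variable {V : Type u} [DecidableEq V]

lemma procList_iff (I : V → V → Finset V → Prop) (i : ℕ) (H0 : V → V → Prop)
    (L : List (V × V)) (H : V → V → Prop) (a b : V) :
    procList I i H0 L H a b ↔
      H a b ∧ ∀ p ∈ L, ¬ (((a, b) = p ∨ (b, a) = p) ∧ Rem I i H0 p.1 p.2) := by
  induction L generalizing H with
  | nil => simp [procList]
  | cons hd tl ih =>
      simp only [procList, List.foldl_cons] at *
      rw [ih]
      simp only [List.mem_cons]
      constructor
      · rintro ⟨⟨h1, h2⟩, h3⟩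
        exact ⟨h1, fun p hp => hp.elim (fun he => he ▸ h2) (h3 p)⟩
      · rintro ⟨h1, h2⟩
        exact ⟨⟨h1, h2 hd (Or.inl rfl)⟩, fun p hp => h2 p (Or.inr hp)⟩

lemma Rem_congr (I : V → V → Finset V → Prop) (i : ℕ) {H0 H0' : V → V → Prop}
    (h : ∀ a b, H0 a b ↔ H0' a b) (u v : V) :
    Rem I i H0 u v ↔ Rem I i H0' u v := by
  unfold Rem
  constructor
  · rintro ⟨S, hS, hsub, hI⟩
    exact ⟨S, hS, hsub.imp
      (fun hs w hw => ⟨(h _ _).mp (hs w hw).1, (hs w hw).2⟩)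
      (fun hs w hw => ⟨(h _ _).mp (hs w hw).1, (hs w hw).2⟩), hI⟩
  · rintro ⟨S, hS, hsub, hI⟩
    exact ⟨S, hS, hsub.imp
      (fun hs w hw => ⟨(h _ _).mpr (hs w hw).1, (hs w hw).2⟩)
      (fun hs w hw => ⟨(h _ _).mpr (hs w hw).1, (hs w hw).2⟩), hI⟩

lemma stableLevels_ne (I : V → V → Finset V → Prop) (Ls : ℕ → List (V × V))
    (n : ℕ) (a b : V) (h : stableLevels I Ls n a b) : a ≠ b := by
  induction n with
  | zero => exact h
  | succ n ih =>
      have := (procList_iff I n (stableLevels I Ls n) (Ls n)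
        (stableLevels I Ls n) a b).mp h
      exact ih this.1

/-- Characterization of one full level when the list contains all distinct
pairs. -/
lemma procList_full (I : V → V → Finset V → Prop) (i : ℕ) (H0 : V → V → Prop)
    (L : List (V × V)) (hL : ∀ u v : V, u ≠ v → (u, v) ∈ L)
    (H : V → V → Prop) (hH : ∀ a b, H a b → a ≠ b) (a b : V) :
    procList I i H0 L H a b ↔
      H a b ∧ ¬ (Rem I i H0 a b ∨ Rem I i H0 b a) := by
  rw [procList_iff]
  constructor
  · rintro ⟨h1, h2⟩
    refine ⟨h1, ?_⟩
    have hab := hH a b h1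
    rintro (hr | hr)
    · exact h2 (a, b) (hL a b hab) ⟨Or.inl rfl, hr⟩
    · exact h2 (b, a) (hL b a (Ne.symm hab)) ⟨Or.inr rfl, hr⟩
  · rintro ⟨h1, h2⟩
    refine ⟨h1, ?_⟩
    rintro ⟨u, v⟩ hp ⟨(he | he), hr⟩ <;>
      simp only [Prod.mk.injEq] at he <;>
      obtain ⟨rfl, rfl⟩ := he
    · exact h2 (Or.inl hr)
    · exact h2 (Or.inr hr)

end StablePC

/-- the skeleton obtained by the stable (level-synchronized)
edge-removal procedure after all levels `i = 0, …, |V| − 2` is the same for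
any two orderings of the pairs within each level. -/
theorem stable_skeleton_order_independent {V : Type u} [DecidableEq V]
    [Fintype V] (I : V → V → Finset V → Prop)
    (Ls Ls' : ℕ → List (V × V))
    (hLs : ∀ i (u v : V), u ≠ v → (u, v) ∈ Ls i)
    (hLs' : ∀ i (u v : V), u ≠ v → (u, v) ∈ Ls' i) :
    ∀ u v : V,
      StablePC.stableLevels I Ls (Fintype.card V - 1) u v ↔
      StablePC.stableLevels I Ls' (Fintype.card V - 1) u v := by
  suffices h : ∀ n (u v : V),
      StablePC.stableLevels I Ls n u v ↔ StablePC.stableLevels I Ls' n u v from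
    h _
  intro n
  induction n with
  | zero => intro u v; rfl
  | succ n ih =>
      intro u v
      rw [show StablePC.stableLevels I Ls (n+1) = StablePC.procList I n
            (StablePC.stableLevels I Ls n) (Ls n) (StablePC.stableLevels I Ls n)
          from rfl,
        show StablePC.stableLevels I Ls' (n+1) = StablePC.procList I n
            (StablePC.stableLevels I Ls' n) (Ls' n) (StablePC.stableLevels I Ls' n)
          from rfl,
        StablePC.procList_full I n _ _ (hLs n) _
          (StablePC.stableLevels_ne I Ls n),
        StablePC.procList_full I n _ _ (hLs' n) _
          (StablePC.stableLevels_ne I Ls' n)]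
      rw [ih u v, StablePC.Rem_congr I n ih u v, StablePC.Rem_congr I n ih v u]
end

section
/- In an MVR chain graph G viewed as a maximal ancestral graph, for any unshielded triple (X_i, X_j, X_k) (X_i and X_j adjacent, X_j and X_k adjacent, X_i and X_k not adjacent), either X_j belongs to every set S ⊆ V \ {X_i, X_k} that m-separates X_i and X_k, or X_j belongs to none of them. Moreover, X_j is in none of them iff X_j is a collider on the path X_i — X_j — X_k (both edges have arrowheads at X_j). -/
/-
The non-adjacency of `xi` and `xk` makes the situation local: the chain `xi, xj, xk` is itself
m-connecting given `S` unless `S` contains `xj` when `xj` is a noncollider and avoids `xj` when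
it is a collider. So for every separating `S`, `xj ∈ S` exactly when `xj` is a noncollider.

What remains is that some separating set exists. Take the vertices `≠ xi, xk` from which a chain
of directed edges, none with an arrowhead back, leads to `xi` or `xk`. On a connecting chain each
endpoint must then reach such a vertex by following arrowheads (noncolliders pass the arrowhead
on, colliders are ancestors of the set), and in every case this closes a partially directed
cycle.
-/

universe u

theorem List.exists_nodup_isChain_of_reflTransGen {α : Type*} {R : α → α → Prop} {a b : α}
    (h : Relation.ReflTransGen R a b) :
    ∃ l : List α, l.Nodup ∧ l.IsChain R ∧ l.head? = some a ∧ l.getLast? = some b := by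
  induction h using Relation.ReflTransGen.head_induction_on with
  | refl => exact ⟨[b], List.nodup_singleton b, List.isChain_singleton b, rfl, rfl⟩
  | @head x c hxc _ ih =>
    obtain ⟨l, hnd, hch, hhd, hlast⟩ := ih
    by_cases hx : x ∈ l
    · obtain ⟨s, t, rfl⟩ := List.append_of_mem hx
      refine ⟨x :: t, (List.suffix_append s (x :: t)).sublist.nodup hnd,
        (List.isChain_append.mp hch).2.1, rfl, ?_⟩
      rwa [← List.getLast?_append_of_ne_nil s (List.cons_ne_nil x t)]
    · obtain ⟨l, rfl⟩ : ∃ l', l = c :: l' := ⟨l.tail, (List.cons_head?_tail hhd).symm⟩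
      exact ⟨x :: c :: l, List.nodup_cons.mpr ⟨hx, hnd⟩, List.IsChain.cons_cons hxc hch, rfl,
        by rwa [List.getLast?_cons_cons]⟩

namespace MixedGraph

variable {V : Type u} (G : MixedGraph V)

/-- A `MixedGraph` may carry several edges between two vertices, so `G.directed u v` alone does
not exclude `v → u` or `u ↔ v`; the edges that behave as `u → v` of a chain graph are these. -/
def PureDirected (u v : V) : Prop :=
  G.directed u v ∧ ¬ G.ArrowAt v u

def PureAn (X : Set V) : Set V :=
  {v | ∃ x ∈ X, Relation.ReflTransGen G.PureDirected v x}

variable {G}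

theorem IsEdge.symm {u v : V} (h : G.IsEdge u v) : G.IsEdge v u := by
  rcases h with h | h | h
  exacts [Or.inr (Or.inl h), Or.inl h, Or.inr (Or.inr (G.bidirected_symm u v h))]

theorem hasPartiallyDirectedCycle_of_isChain (l : List V) (hnd : l.Nodup) (h3 : 3 ≤ l.length)
    (hch : l.IsChain G.ArrowAt) (hd : G.directed (l.getLast (by grind)) (l.head (by grind))) :
    G.HasPartiallyDirectedCycle := by
  obtain ⟨k, hk⟩ : ∃ k, l.length = k + 1 := ⟨l.length - 1, by omega⟩
  let f : Fin (k + 1) → V := fun i => l[i.val]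
  have hclose : G.directed (f (Fin.last k)) (f (Fin.last k + 1)) := by
    simpa [f, Fin.last_add_one, List.getLast_eq_getElem, List.head_eq_getElem, hk] using hd
  have hstep : ∀ i : Fin (k + 1), G.ArrowAt (f i) (f (i + 1)) := by
    intro i
    rcases (Fin.le_last i).lt_or_eq with hi | rfl
    · simpa [f, Fin.val_add_one_of_lt hi] using List.isChain_iff_getElem.mp hch i (by omega)
    · exact Or.inl hclose
  refine ⟨k + 1, f, by omega, fun i j hij => ?_, hstep, Fin.last k, hclose⟩
  exact Fin.ext (hnd.getElem_inj_iff.mp hij)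


theorem pureDirected_of_isEdge {u v : V} (h : G.IsEdge u v) (hna : ¬ G.ArrowAt u v) :
    G.PureDirected v u := by
  rcases h with h | h | h
  exacts [absurd (Or.inl h) hna, ⟨h, hna⟩, absurd (Or.inr h) hna]

theorem Ancestor.reflTransGen_arrowAt {u v : V} (h : G.Ancestor u v) :
    Relation.ReflTransGen G.ArrowAt u v :=
  Relation.ReflTransGen.mono (fun _ _ => Or.inl) _ _ h

theorem reflTransGen_arrowAt_of_transGen {u v : V} (h : Relation.TransGen G.PureDirected u v) :
    Relation.ReflTransGen G.ArrowAt u v :=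
  (Relation.TransGen.mono (fun _ _ h => Or.inl h.1) _ _ h).to_reflTransGen

theorem not_reflTransGen_arrowAt_of_pureDirected (hcg : ¬ G.HasPartiallyDirectedCycle) {a b : V}
    (hab : G.PureDirected a b) : ¬ Relation.ReflTransGen G.ArrowAt b a := by
  intro hba
  obtain ⟨l, hnd, hch, hhd, hlast⟩ := List.exists_nodup_isChain_of_reflTransGen hba
  match l, hnd, hch, hhd, hlast with
  | [x], _, _, hhd, hlast =>
    obtain rfl : x = b := by simpa using hhd
    obtain rfl : x = a := by simpa using hlast
    exact hab.2 (Or.inl hab.1)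
  | [x, y], _, hch, hhd, hlast =>
    obtain rfl : x = b := by simpa using hhd
    obtain rfl : y = a := by simpa using hlast
    exact hab.2 (List.isChain_pair.mp hch)
  | x :: y :: z :: l, hnd, hch, hhd, hlast =>
    refine hcg (hasPartiallyDirectedCycle_of_isChain _ hnd (by simp) hch ?_)
    obtain rfl : x = b := by simpa using hhd
    rw [List.getLast_of_getLast?_eq_some hlast]
    exact hab.1

theorem not_reflTransGen_arrowAt_of_transGen (hcg : ¬ G.HasPartiallyDirectedCycle) {a b : V}
    (hab : Relation.TransGen G.PureDirected a b) : ¬ Relation.ReflTransGen G.ArrowAt b a := by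
  obtain ⟨c, hac, hcb⟩ := Relation.TransGen.head'_iff.mp hab
  exact fun hba => not_reflTransGen_arrowAt_of_pureDirected hcg hac
    ((Relation.ReflTransGen.mono (fun _ _ h => Or.inl h.1) _ _ hcb).trans hba)

theorem colliderAt_one_iff {a w b : V} {l : List V} :
    G.ColliderAt (a :: w :: b :: l) 1 w ↔ G.ColliderTriple a w b := by
  simp [ColliderAt]

theorem colliderAt_cons_iff {a w : V} {p : List V} {k : ℕ} :
    G.ColliderAt (a :: p) (k + 2) w ↔ G.ColliderAt p (k + 1) w := by
  simp [ColliderAt]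

theorem colliderAt_reverse {p : List V} {k : ℕ} {w : V} (hk : 0 < k) (hkp : k + 1 < p.length) :
    G.ColliderAt p.reverse k w ↔ G.ColliderAt p (p.length - 1 - k) w := by
  unfold ColliderAt
  rw [List.getElem?_reverse (by omega), List.getElem?_reverse (by omega),
    List.getElem?_reverse (by omega), show p.length - 1 - (k - 1) = p.length - 1 - k + 1 by omega,
    show p.length - 1 - (k + 1) = p.length - 1 - k - 1 by omega]
  constructor <;> exact fun ⟨a, b, ha, hw, hb, h⟩ => ⟨b, a, hb, hw, ha, h.symm⟩

namespace MConnecting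

variable {Z : Set V} {α β : V} {p : List V}

theorem reverse (hp : G.MConnecting Z α β p) : G.MConnecting Z β α p.reverse := by
  obtain ⟨hnd, hhd, hlast, hlen, hch, hint⟩ := hp
  refine ⟨List.nodup_reverse.mpr hnd, by rwa [List.head?_reverse], by rwa [List.getLast?_reverse],
    by rwa [List.length_reverse], List.isChain_reverse.mpr (hch.imp fun _ _ => IsEdge.symm), ?_⟩
  intro k w hk hkp hw
  rw [List.length_reverse] at hkp
  rw [List.getElem?_reverse (by omega)] at hw
  rw [colliderAt_reverse hk hkp]
  exact hint _ w (by omega) (by omega) hw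

theorem tail {a w b : V} {l : List V} (hp : G.MConnecting Z a β (a :: w :: b :: l)) :
    G.MConnecting Z w β (w :: b :: l) := by
  obtain ⟨hnd, -, hlast, -, hch, hint⟩ := hp
  refine ⟨hnd.of_cons, rfl, hlast, by simp, hch.tail, fun k v hk hkl hv => ?_⟩
  obtain ⟨k, rfl⟩ : ∃ k', k = k' + 1 := ⟨k - 1, by omega⟩
  simpa only [colliderAt_cons_iff] using
    hint (k + 2) v (by omega) (by simpa using hkl) (by simpa using hv)

theorem unblocked_second {a w b : V} {l : List V} (hp : G.MConnecting Z a β (a :: w :: b :: l)) :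
    (G.ColliderTriple a w b → w ∈ G.An Z) ∧ (¬ G.ColliderTriple a w b → w ∉ Z) := by
  simpa only [colliderAt_one_iff] using hp.2.2.2.2.2 1 w one_pos (by simp) rfl

end MConnecting

/-- Along a path that enters `w ∉ A` with an arrowhead, every noncollider passes the arrowhead on
through a pure directed edge, which keeps the path outside the `PureDirected`-ancestral set `A`;
since the path ends in `A`, some collider must come first. -/
theorem exists_reach_of_mConnecting_cons {A Z : Set V} {β : V}
    (hA : ∀ u v, G.PureDirected u v → v ∈ A → u ∈ A) (hβ : β ∈ A) :
    ∀ (l : List V) (a w : V), G.MConnecting Z a β (a :: w :: l) → G.ArrowAt a w → w ∉ A →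
      ∃ z ∈ Z, Relation.ReflTransGen G.ArrowAt w z
  | [], _, w, hp, _, hw => by
    obtain rfl : w = β := by simpa using hp.2.2.1
    exact absurd hβ hw
  | b :: l, a, w, hp, haw, hw => by
    obtain ⟨hcol, hncol⟩ := hp.unblocked_second
    by_cases hC : G.ColliderTriple a w b
    · obtain ⟨z, hz, hwz⟩ := hcol hC
      exact ⟨z, hz, hwz.reflTransGen_arrowAt⟩
    · have hwb : G.PureDirected w b :=
        pureDirected_of_isEdge (List.isChain_cons_cons.mp hp.2.2.2.2.1).2.rel.symm
          fun hbw => hC ⟨haw, hbw⟩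
      obtain ⟨z, hz, hbz⟩ := exists_reach_of_mConnecting_cons hA hβ l w b hp.tail (Or.inl hwb.1)
        fun hb => hw (hA w b hwb hb)
      exact ⟨z, hz, .head (Or.inl hwb.1) hbz⟩

theorem exists_reach_of_mConnecting {A : Set V} {α β : V} {p : List V}
    (hA : ∀ u v, G.PureDirected u v → v ∈ A → u ∈ A) (hα : α ∈ A) (hβ : β ∈ A)
    (hαβ : ¬ G.IsEdge α β) (hp : G.MConnecting (A \ {α, β}) α β p) :
    ∃ z ∈ A \ {α, β}, Relation.ReflTransGen G.ArrowAt α z := by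
  obtain ⟨w, b, l, rfl⟩ : ∃ w b l, p = α :: w :: b :: l := by
    obtain ⟨hnd, hhd, hlast, hlen, hch, -⟩ := hp
    match p, hhd, hlast, hlen, hch with
    | [a, w], hhd, hlast, _, hch =>
      obtain rfl : a = α := by simpa using hhd
      obtain rfl : w = β := by simpa using hlast
      exact absurd (List.isChain_pair.mp hch) hαβ
    | a :: w :: b :: l, hhd, _, _, _ => exact ⟨w, b, l, by simpa using hhd⟩
  obtain ⟨hcol, hncol⟩ := hp.unblocked_second
  by_cases hC : G.ColliderTriple α w b
  · obtain ⟨z, hz, hwz⟩ := hcol hC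
    exact ⟨z, hz, .head hC.1 hwz.reflTransGen_arrowAt⟩
  · have hw : w ∉ A := by
      obtain ⟨hαw, hwl⟩ : α ≠ w ∧ w ∉ b :: l := by
        have hnd := hp.1
        simp only [List.nodup_cons, List.mem_cons] at hnd ⊢
        tauto
      refine fun hwA => hncol hC ⟨hwA, ?_⟩
      rintro (rfl | rfl)
      exacts [hαw rfl, hwl (List.mem_of_getLast? hp.2.2.1)]
    have hαw : G.ArrowAt α w := by
      by_contra hαw
      exact hw (hA w α (pureDirected_of_isEdge (List.isChain_cons_cons.mp hp.2.2.2.2.1).1 hαw) hα)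
    obtain ⟨z, hz, hwz⟩ := exists_reach_of_mConnecting_cons hA hβ (b :: l) α w hp hαw hw
    exact ⟨z, hz, .head hαw hwz⟩

theorem mem_pureAn_of_pureDirected {X : Set V} {u v : V} (huv : G.PureDirected u v)
    (hv : v ∈ G.PureAn X) : u ∈ G.PureAn X :=
  let ⟨x, hx, hvx⟩ := hv
  ⟨x, hx, .head huv hvx⟩

theorem subset_pureAn (X : Set V) : X ⊆ G.PureAn X :=
  fun x hx => ⟨x, hx, .refl⟩

theorem exists_transGen_of_mem_pureAn_diff {X : Set V} {v : V} (hv : v ∈ G.PureAn X \ X) :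
    ∃ x ∈ X, Relation.TransGen G.PureDirected v x := by
  obtain ⟨⟨x, hx, hvx⟩, hvX⟩ := hv
  rcases Relation.reflTransGen_iff_eq_or_transGen.mp hvx with rfl | h
  exacts [absurd hx hvX, ⟨x, hx, h⟩]

theorem mSep_pureAn_diff (hcg : ¬ G.HasPartiallyDirectedCycle) {xi xk : V}
    (hik : ¬ G.IsEdge xi xk) : G.MSep {xi} {xk} (G.PureAn {xi, xk} \ {xi, xk}) := by
  intro α hα β hβ p hp
  subst α β
  have hA : ∀ u v, G.PureDirected u v → v ∈ G.PureAn {xi, xk} → u ∈ G.PureAn {xi, xk} :=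
    fun _ _ => mem_pureAn_of_pureDirected
  have hi : xi ∈ G.PureAn {xi, xk} := subset_pureAn _ (by simp)
  have hk : xk ∈ G.PureAn {xi, xk} := subset_pureAn _ (by simp)
  obtain ⟨z, hz, hiz⟩ := exists_reach_of_mConnecting hA hi hk hik hp
  obtain ⟨z', hz', hkz'⟩ := exists_reach_of_mConnecting hA hk hi (fun h => hik h.symm)
    (by rw [Set.pair_comm xk xi]; exact hp.reverse)
  rw [Set.pair_comm xk xi] at hz'
  obtain ⟨y, hy, hzy⟩ := exists_transGen_of_mem_pureAn_diff hz
  obtain ⟨y', hy', hzy'⟩ := exists_transGen_of_mem_pureAn_diff hz'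
  have acyclic := @not_reflTransGen_arrowAt_of_transGen _ _ hcg
  rcases hy with hy | hy <;> subst y
  · exact acyclic hzy hiz
  rcases hy' with hy' | hy' <;> subst y'
  · exact acyclic hzy (hkz'.trans ((reflTransGen_arrowAt_of_transGen hzy').trans hiz))
  · exact acyclic hzy' hkz'

theorem mConnecting_triple {Z : Set V} {xi xj xk : V} (hij : G.IsEdge xi xj)
    (hjk : G.IsEdge xj xk) (hik : ¬ G.IsEdge xi xk) (hne : xi ≠ xk)
    (hcol : G.ColliderTriple xi xj xk → xj ∈ G.An Z)
    (hncol : ¬ G.ColliderTriple xi xj xk → xj ∉ Z) :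
    G.MConnecting Z xi xk [xi, xj, xk] := by
  have hij' : xi ≠ xj := by rintro rfl; exact hik hjk
  have hjk' : xj ≠ xk := by rintro rfl; exact hik hij
  refine ⟨by simp [hij', hjk', hne], rfl, rfl, by simp, .cons_cons hij (.cons_cons hjk (.singleton _)),
    fun k w hk hk3 hw => ?_⟩
  obtain rfl : k = 1 := by simp at hk3; omega
  obtain rfl : xj = w := by simpa using hw
  simpa only [colliderAt_one_iff] using ⟨hcol, hncol⟩

theorem mem_iff_not_colliderTriple_of_mSep {S : Set V} {xi xj xk : V} (hij : G.IsEdge xi xj)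
    (hjk : G.IsEdge xj xk) (hik : ¬ G.IsEdge xi xk) (hne : xi ≠ xk)
    (hS : G.MSep {xi} {xk} S) : xj ∈ S ↔ ¬ G.ColliderTriple xi xj xk := by
  constructor
  · exact fun hj hC => hS xi rfl xk rfl _
      (mConnecting_triple hij hjk hik hne (fun _ => ⟨xj, hj, .refl⟩) (absurd hC))
  · exact fun hC => by_contra fun hj => hS xi rfl xk rfl _
      (mConnecting_triple hij hjk hik hne (absurd · hC) fun _ => hj)

end MixedGraph

/-- in an MVR chain graph, for any unshielded triple
`(Xᵢ, Xⱼ, Xₖ)`, either `Xⱼ` is in every m-separating set for `Xᵢ, Xₖ` or in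
none of them; and it is in none of them iff `Xⱼ` is a collider on
`Xᵢ — Xⱼ — Xₖ`. -/
theorem unshielded_triple_unambiguous {V : Type u} (G : MixedGraph V)
    (hcg : ¬ G.HasPartiallyDirectedCycle) (xi xj xk : V)
    (hij : G.IsEdge xi xj) (hjk : G.IsEdge xj xk) (hik : ¬ G.IsEdge xi xk)
    (hne : xi ≠ xk) :
    ((∀ S : Set V, xi ∉ S → xk ∉ S → G.MSep {xi} {xk} S → xj ∈ S) ∨
     (∀ S : Set V, xi ∉ S → xk ∉ S → G.MSep {xi} {xk} S → xj ∉ S)) ∧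
    ((∀ S : Set V, xi ∉ S → xk ∉ S → G.MSep {xi} {xk} S → xj ∉ S) ↔
      (G.ArrowAt xi xj ∧ G.ArrowAt xk xj)) := by
  have hmem (S : Set V) (hS : G.MSep {xi} {xk} S) : xj ∈ S ↔ ¬ G.ColliderTriple xi xj xk :=
    MixedGraph.mem_iff_not_colliderTriple_of_mSep hij hjk hik hne hS
  have hS₀ := MixedGraph.mSep_pureAn_diff hcg hik
  refine ⟨?_, fun hnone => ?_, fun hC S _ _ hS => (hmem S hS).not_left.mpr hC⟩
  · by_cases hC : G.ColliderTriple xi xj xk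
    · exact .inr fun S _ _ hS => (hmem S hS).not_left.mpr hC
    · exact .inl fun S _ _ hS => (hmem S hS).mpr hC
  · by_contra hC
    exact hnone _ (fun h => h.2 (by simp)) (fun h => h.2 (by simp)) hS₀ ((hmem _ hS₀).mpr hC)
end
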